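/- Let ρ be the 4×4 density matrix of the two-qubit pure state |ψ⟩ = (1/(2√2))[(κ₁+κ₂)|↓↓⟩ + i(κ₁−κ₂)|↑↓⟩ + i(κ₁−κ₂)|↓↑⟩ − (κ₁+κ₂)|↑↑⟩] with κ₁ = e^{i(φ_R+φ_L)}, κ₂ = e^{i(φ_D+φ_U)}. Then the matrix R = ρ·(σ_y ⊗ σ_y)·ρ*·(σ_y ⊗ σ_y), where ρ* denotes entrywise complex conjugation, has eigenvalues {1, 0, 0, 0}; consequently the concurrence C(ρ) = max{0, √λ₁ − √λ₂ − √λ₃ − √λ₄} equals 1. -/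
import Mathlib

open Complex Polynomial

noncomputable def psiPhase (φR φL φD φU : ℝ) : Fin 2 × Fin 2 → ℂ :=
  let κ1 : ℂ := Complex.exp (Complex.I * ((φR : ℂ) + (φL : ℂ)))
  let κ2 : ℂ := Complex.exp (Complex.I * ((φD : ℂ) + (φU : ℂ)))
  fun p =>
    (1 / (2 * (Real.sqrt 2 : ℂ))) *
      (![![κ1 + κ2, Complex.I * (κ1 - κ2)],
         ![Complex.I * (κ1 - κ2), -(κ1 + κ2)]] p.1 p.2)

/-- The density matrix ρ = |ψ⟩⟨ψ|. -/
noncomputable def rhoPhase (φR φL φD φU : ℝ) :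
    Matrix (Fin 2 × Fin 2) (Fin 2 × Fin 2) ℂ :=
  Matrix.of fun a b => psiPhase φR φL φD φU a * (starRingEnd ℂ) (psiPhase φR φL φD φU b)

/-- σ_y ⊗ σ_y. -/
noncomputable def sigmaYY : Matrix (Fin 2 × Fin 2) (Fin 2 × Fin 2) ℂ :=
  Matrix.kroneckerMap (· * ·) !![0, -Complex.I; Complex.I, 0] !![0, -Complex.I; Complex.I, 0]

/-- The Wootters matrix R = ρ (σ_y⊗σ_y) ρ* (σ_y⊗σ_y). -/
noncomputable def woottersR (φR φL φD φU : ℝ) :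
    Matrix (Fin 2 × Fin 2) (Fin 2 × Fin 2) ℂ :=
  rhoPhase φR φL φD φU * sigmaYY * (rhoPhase φR φL φD φU).map (starRingEnd ℂ) * sigmaYY

/-! ### Auxiliary lemmas -/

lemma aux_vecMulVec_mul {m : Type*} [Fintype m] (v w : m → ℂ) (M : Matrix m m ℂ) :
    Matrix.vecMulVec v w * M = Matrix.vecMulVec v (Matrix.vecMul w M) := by
  ext i j
  simp [Matrix.mul_apply, Matrix.vecMulVec_apply, Matrix.vecMul, dotProduct,
    Finset.mul_sum, mul_assoc]

lemma aux_vecMulVec_mul_vecMulVec {m : Type*} [Fintype m] (v w x y : m → ℂ) :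
    Matrix.vecMulVec v w * Matrix.vecMulVec x y =
      (dotProduct w x) • Matrix.vecMulVec v y := by
  ext i j
  simp only [Matrix.mul_apply, Matrix.vecMulVec_apply, dotProduct, Finset.sum_mul,
    Matrix.smul_apply, smul_eq_mul, Finset.mul_sum]
  exact Finset.sum_congr rfl fun k _ => by ring

lemma aux_vecMulVec_smul_right {m : Type*} (v w : m → ℂ) (c : ℂ) :
    Matrix.vecMulVec v (c • w) = c • Matrix.vecMulVec v w := by
  ext i j
  simp only [Matrix.vecMulVec_apply, Pi.smul_apply, smul_eq_mul, Matrix.smul_apply]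
  ring

lemma sqrt2_sq : ((Real.sqrt 2 : ℝ) : ℂ) * ((Real.sqrt 2 : ℝ) : ℂ) = 2 := by
  norm_cast
  rw [Real.mul_self_sqrt]
  norm_num

lemma kappa_unit (s t : ℝ) :
    Complex.exp (Complex.I * ((s:ℂ) + (t:ℂ))) *
      (starRingEnd ℂ) (Complex.exp (Complex.I * ((s:ℂ) + (t:ℂ)))) = 1 := by
  rw [← Complex.exp_conj, ← Complex.exp_add]
  have h : (Complex.I * ((s:ℂ) + (t:ℂ))) + (starRingEnd ℂ) (Complex.I * ((s:ℂ) + (t:ℂ))) = 0 := by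
    simp only [map_mul, map_add, Complex.conj_I, Complex.conj_ofReal]
    ring
  rw [h, Complex.exp_zero]

section main
variable (φR φL φD φU : ℝ)

lemma rho_eq_vecMulVec :
    rhoPhase φR φL φD φU =
      Matrix.vecMulVec (psiPhase φR φL φD φU)
        (fun p => (starRingEnd ℂ) (psiPhase φR φL φD φU p)) := rfl

lemma rho_map_eq :
    (rhoPhase φR φL φD φU).map (starRingEnd ℂ) =
      Matrix.vecMulVec (fun p => (starRingEnd ℂ) (psiPhase φR φL φD φU p))
        (psiPhase φR φL φD φU) := by
  ext i j
  simp [rhoPhase, Matrix.vecMulVec_apply, Matrix.map_apply, mul_comm]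

lemma psi_norm :
    dotProduct (psiPhase φR φL φD φU)
      (fun p => (starRingEnd ℂ) (psiPhase φR φL φD φU p)) = 1 := by
  have ha := kappa_unit φR φL
  have hb := kappa_unit φD φU
  have hI : Complex.I * Complex.I = -1 := Complex.I_mul_I
  have hc : (1 / (2 * ((Real.sqrt 2 : ℝ) : ℂ))) * (1 / (2 * ((Real.sqrt 2 : ℝ) : ℂ))) =
      1 / 8 := by
    have h := sqrt2_sq
    rw [div_mul_div_comm, one_mul]
    rw [show (2 * ((Real.sqrt 2:ℝ):ℂ)) * (2 * ((Real.sqrt 2:ℝ):ℂ)) =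
      4 * (((Real.sqrt 2:ℝ):ℂ) * ((Real.sqrt 2:ℝ):ℂ)) by ring, h]
    norm_num
  simp only [dotProduct, Fintype.sum_prod_type, Fin.sum_univ_two, psiPhase,
    Matrix.cons_val', Matrix.cons_val_zero, Matrix.cons_val_one, Matrix.head_cons,
    Matrix.empty_val', Matrix.cons_val_fin_one, Matrix.head_fin_const,
    map_mul, map_add, map_sub, map_neg, map_one, map_div₀, map_ofNat,
    Complex.conj_I, Complex.conj_ofReal]
  set c : ℂ := 1 / (2 * ((Real.sqrt 2 : ℝ) : ℂ)) with hcdef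
  set a : ℂ := Complex.exp (Complex.I * ((φR:ℂ) + (φL:ℂ))) with hadef
  set b : ℂ := Complex.exp (Complex.I * ((φD:ℂ) + (φU:ℂ))) with hbdef
  linear_combination (4*c*c)*ha + (4*c*c)*hb + 8*hc -
    (2*c*c*(a - b)*((starRingEnd ℂ) a - (starRingEnd ℂ) b))*hI

lemma key2 :
    Matrix.vecMul (psiPhase φR φL φD φU) sigmaYY =
      (Complex.exp (Complex.I * ((φR:ℂ) + (φL:ℂ))) *
        Complex.exp (Complex.I * ((φD:ℂ) + (φU:ℂ)))) •
        (fun p => (starRingEnd ℂ) (psiPhase φR φL φD φU p)) := by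
  have ha := kappa_unit φR φL
  have hb := kappa_unit φD φU
  funext p
  obtain ⟨p1, p2⟩ := p
  set t : ℂ := (((Real.sqrt 2 : ℝ) : ℂ))⁻¹ * (1/2) with htdef
  set a : ℂ := Complex.exp (Complex.I * ((φR:ℂ) + (φL:ℂ))) with hadef
  set b : ℂ := Complex.exp (Complex.I * ((φD:ℂ) + (φU:ℂ))) with hbdef
  fin_cases p1 <;> fin_cases p2
  · simp only [Matrix.vecMul, dotProduct, Fintype.sum_prod_type, Fin.sum_univ_two,
      psiPhase, sigmaYY, Matrix.kroneckerMap_apply, Pi.smul_apply, smul_eq_mul,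
      Matrix.cons_val', Matrix.cons_val_zero, Matrix.cons_val_one, Matrix.head_cons,
      Matrix.empty_val', Matrix.cons_val_fin_one, Matrix.head_fin_const,
      map_mul, map_add, map_sub, map_neg, map_one, map_div₀, map_ofNat,
      Complex.conj_I, Complex.conj_ofReal, Matrix.of_apply]
    norm_num
    linear_combination (-(t)*b)*ha + (-(t)*a)*hb
  · simp only [Matrix.vecMul, dotProduct, Fintype.sum_prod_type, Fin.sum_univ_two,
      psiPhase, sigmaYY, Matrix.kroneckerMap_apply, Pi.smul_apply, smul_eq_mul,
      Matrix.cons_val', Matrix.cons_val_zero, Matrix.cons_val_one, Matrix.head_cons,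
      Matrix.empty_val', Matrix.cons_val_fin_one, Matrix.head_fin_const,
      map_mul, map_add, map_sub, map_neg, map_one, map_div₀, map_ofNat,
      Complex.conj_I, Complex.conj_ofReal, Matrix.of_apply]
    norm_num
    linear_combination (t*Complex.I*b)*ha + (-(t)*Complex.I*a)*hb
  · simp only [Matrix.vecMul, dotProduct, Fintype.sum_prod_type, Fin.sum_univ_two,
      psiPhase, sigmaYY, Matrix.kroneckerMap_apply, Pi.smul_apply, smul_eq_mul,
      Matrix.cons_val', Matrix.cons_val_zero, Matrix.cons_val_one, Matrix.head_cons,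
      Matrix.empty_val', Matrix.cons_val_fin_one, Matrix.head_fin_const,
      map_mul, map_add, map_sub, map_neg, map_one, map_div₀, map_ofNat,
      Complex.conj_I, Complex.conj_ofReal, Matrix.of_apply]
    norm_num
    linear_combination (t*Complex.I*b)*ha + (-(t)*Complex.I*a)*hb
  · simp only [Matrix.vecMul, dotProduct, Fintype.sum_prod_type, Fin.sum_univ_two,
      psiPhase, sigmaYY, Matrix.kroneckerMap_apply, Pi.smul_apply, smul_eq_mul,
      Matrix.cons_val', Matrix.cons_val_zero, Matrix.cons_val_one, Matrix.head_cons,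
      Matrix.empty_val', Matrix.cons_val_fin_one, Matrix.head_fin_const,
      map_mul, map_add, map_sub, map_neg, map_one, map_div₀, map_ofNat,
      Complex.conj_I, Complex.conj_ofReal, Matrix.of_apply]
    norm_num
    linear_combination (t*b)*ha + (t*a)*hb

lemma key1 :
    Matrix.vecMul (fun p => (starRingEnd ℂ) (psiPhase φR φL φD φU p)) sigmaYY =
      ((starRingEnd ℂ) (Complex.exp (Complex.I * ((φR:ℂ) + (φL:ℂ)))) *
       (starRingEnd ℂ) (Complex.exp (Complex.I * ((φD:ℂ) + (φU:ℂ))))) •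
        (psiPhase φR φL φD φU) := by
  have ha := kappa_unit φR φL
  have hb := kappa_unit φD φU
  funext p
  obtain ⟨p1, p2⟩ := p
  set t : ℂ := (((Real.sqrt 2 : ℝ) : ℂ))⁻¹ * (1/2) with htdef
  set a : ℂ := Complex.exp (Complex.I * ((φR:ℂ) + (φL:ℂ))) with hadef
  set b : ℂ := Complex.exp (Complex.I * ((φD:ℂ) + (φU:ℂ))) with hbdef
  fin_cases p1 <;> fin_cases p2
  · simp only [Matrix.vecMul, dotProduct, Fintype.sum_prod_type, Fin.sum_univ_two,
      psiPhase, sigmaYY, Matrix.kroneckerMap_apply, Pi.smul_apply, smul_eq_mul,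
      Matrix.cons_val', Matrix.cons_val_zero, Matrix.cons_val_one, Matrix.head_cons,
      Matrix.empty_val', Matrix.cons_val_fin_one, Matrix.head_fin_const,
      map_mul, map_add, map_sub, map_neg, map_one, map_div₀, map_ofNat,
      Complex.conj_I, Complex.conj_ofReal, Matrix.of_apply]
    norm_num
    linear_combination (-(t)*(starRingEnd ℂ) b)*ha + (-(t)*(starRingEnd ℂ) a)*hb
  · simp only [Matrix.vecMul, dotProduct, Fintype.sum_prod_type, Fin.sum_univ_two,
      psiPhase, sigmaYY, Matrix.kroneckerMap_apply, Pi.smul_apply, smul_eq_mul,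
      Matrix.cons_val', Matrix.cons_val_zero, Matrix.cons_val_one, Matrix.head_cons,
      Matrix.empty_val', Matrix.cons_val_fin_one, Matrix.head_fin_const,
      map_mul, map_add, map_sub, map_neg, map_one, map_div₀, map_ofNat,
      Complex.conj_I, Complex.conj_ofReal, Matrix.of_apply]
    norm_num
    linear_combination (-(t)*Complex.I*(starRingEnd ℂ) b)*ha + (t*Complex.I*(starRingEnd ℂ) a)*hb
  · simp only [Matrix.vecMul, dotProduct, Fintype.sum_prod_type, Fin.sum_univ_two,
      psiPhase, sigmaYY, Matrix.kroneckerMap_apply, Pi.smul_apply, smul_eq_mul,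
      Matrix.cons_val', Matrix.cons_val_zero, Matrix.cons_val_one, Matrix.head_cons,
      Matrix.empty_val', Matrix.cons_val_fin_one, Matrix.head_fin_const,
      map_mul, map_add, map_sub, map_neg, map_one, map_div₀, map_ofNat,
      Complex.conj_I, Complex.conj_ofReal, Matrix.of_apply]
    norm_num
    linear_combination (-(t)*Complex.I*(starRingEnd ℂ) b)*ha + (t*Complex.I*(starRingEnd ℂ) a)*hb
  · simp only [Matrix.vecMul, dotProduct, Fintype.sum_prod_type, Fin.sum_univ_two,
      psiPhase, sigmaYY, Matrix.kroneckerMap_apply, Pi.smul_apply, smul_eq_mul,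
      Matrix.cons_val', Matrix.cons_val_zero, Matrix.cons_val_one, Matrix.head_cons,
      Matrix.empty_val', Matrix.cons_val_fin_one, Matrix.head_fin_const,
      map_mul, map_add, map_sub, map_neg, map_one, map_div₀, map_ofNat,
      Complex.conj_I, Complex.conj_ofReal, Matrix.of_apply]
    norm_num
    linear_combination (t*(starRingEnd ℂ) b)*ha + (t*(starRingEnd ℂ) a)*hb

lemma woottersR_eq : woottersR φR φL φD φU = rhoPhase φR φL φD φU := by
  have ha := kappa_unit φR φL
  have hb := kappa_unit φD φU
  rw [woottersR, rho_map_eq, rho_eq_vecMulVec,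
    aux_vecMulVec_mul _ _ sigmaYY, key1,
    aux_vecMulVec_smul_right, Matrix.smul_mul, aux_vecMulVec_mul_vecMulVec,
    psi_norm, one_smul, Matrix.smul_mul, aux_vecMulVec_mul _ _ sigmaYY, key2,
    aux_vecMulVec_smul_right, smul_smul]
  have hone : ((starRingEnd ℂ) (Complex.exp (Complex.I * ((φR:ℂ) + (φL:ℂ)))) *
       (starRingEnd ℂ) (Complex.exp (Complex.I * ((φD:ℂ) + (φU:ℂ)))) *
      (Complex.exp (Complex.I * ((φR:ℂ) + (φL:ℂ))) *
        Complex.exp (Complex.I * ((φD:ℂ) + (φU:ℂ)))) : ℂ) = 1 := by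
    linear_combination ((starRingEnd ℂ) (Complex.exp (Complex.I * ((φD:ℂ) + (φU:ℂ)))) *
          Complex.exp (Complex.I * ((φD:ℂ) + (φU:ℂ))))*ha + hb
  rw [hone, one_smul]

lemma rank1_charpoly (v w : Fin 4 → ℂ) (h : v 0 * w 0 + v 1 * w 1 + v 2 * w 2 + v 3 * w 3 = 1) :
    (Matrix.of fun i j => v i * w j).charpoly = X^4 - X^3 := by
  have hC : (C (v 0 * w 0 + v 1 * w 1 + v 2 * w 2 + v 3 * w 3) : ℂ[X]) = 1 := by rw [h, map_one]
  rw [Matrix.charpoly]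
  simp only [Matrix.det_succ_row_zero, Fin.sum_univ_succ, Matrix.charmatrix_apply,
    Matrix.diagonal_apply, Matrix.map_apply, Matrix.of_apply, Matrix.submatrix_apply,
    Fin.succAbove, Fin.isValue, Fin.sum_univ_zero, Matrix.det_fin_zero]
  norm_num [Fin.succ_ne_zero, Fin.lt_def, Fin.ext_iff]
  simp only [map_mul, map_add, show (Fin.succ 2 : Fin 4) = 3 from rfl] at hC ⊢
  linear_combination (-(X:ℂ[X])^3) * hC

lemma woottersR_charpoly : (woottersR φR φL φD φU).charpoly = X^4 - X^3 := by
  set e : Fin 2 × Fin 2 ≃ Fin 4 := finProdFinEquiv with hedef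
  rw [woottersR_eq, rho_eq_vecMulVec]
  rw [← Matrix.charpoly_reindex e]
  have hre : (Matrix.reindex e e (Matrix.vecMulVec (psiPhase φR φL φD φU)
      (fun p => (starRingEnd ℂ) (psiPhase φR φL φD φU p)))) =
      Matrix.of fun i j => (psiPhase φR φL φD φU (e.symm i)) *
        ((starRingEnd ℂ) (psiPhase φR φL φD φU (e.symm j))) := by
    ext i j
    simp [Matrix.vecMulVec_apply]
  rw [hre]
  apply rank1_charpoly
  have hn := psi_norm φR φL φD φU
  simp only [dotProduct, Fintype.sum_prod_type, Fin.sum_univ_two] at hn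
  have h0 : e.symm 0 = (0, 0) := by rw [hedef]; decide
  have h1 : e.symm 1 = (0, 1) := by rw [hedef]; decide
  have h2 : e.symm 2 = (1, 0) := by rw [hedef]; decide
  have h3 : e.symm 3 = (1, 1) := by rw [hedef]; decide
  rw [h0, h1, h2, h3]
  linear_combination hn

lemma woottersR_roots : (woottersR φR φL φD φU).charpoly.roots = ({1, 0, 0, 0} : Multiset ℂ) := by
  rw [woottersR_charpoly]
  have : ((X:ℂ[X])^4 - X^3) = X^3 * (X - C 1) := by rw [Polynomial.C_1]; ring
  rw [this, Polynomial.roots_mul (mul_ne_zero (pow_ne_zero _ Polynomial.X_ne_zero)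
      (Polynomial.X_sub_C_ne_zero 1)), Polynomial.roots_pow, Polynomial.roots_X,
    Polynomial.roots_X_sub_C]
  show (0 ::ₘ 0 ::ₘ 0 ::ₘ 0) + {1} = _
  rw [show ({1,0,0,0} : Multiset ℂ) = 1 ::ₘ (0 ::ₘ 0 ::ₘ 0 ::ₘ 0) from rfl]
  simp [Multiset.cons_swap]
  exact Multiset.cons_swap 0 1 0

end main

/-- R has eigenvalues {1,0,0,0}, hence the concurrence
    max{0, √λ₁ − √λ₂ − √λ₃ − √λ₄} equals 1. -/
theorem concurrence_eq_one (φR φL φD φU : ℝ) :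
    (woottersR φR φL φD φU).charpoly.roots = ({1, 0, 0, 0} : Multiset ℂ) ∧
    ∀ lam : Fin 4 → ℝ, Antitone lam →
      (Finset.univ.val.map fun i => ((lam i : ℝ) : ℂ)) = (woottersR φR φL φD φU).charpoly.roots →
      max 0 (Real.sqrt (lam 0) - Real.sqrt (lam 1) - Real.sqrt (lam 2) - Real.sqrt (lam 3)) = 1 := by
  refine ⟨woottersR_roots φR φL φD φU, ?_⟩
  intro lam hmono heq
  rw [woottersR_roots φR φL φD φU] at heq
  -- extract the real multiset equality
  have huniv : (Finset.univ.val : Multiset (Fin 4)) = {0, 1, 2, 3} := by decide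
  rw [huniv] at heq
  have heqR : ({lam 0, lam 1, lam 2, lam 3} : Multiset ℝ) = ({1, 0, 0, 0} : Multiset ℝ) := by
    have := congrArg (Multiset.map Complex.re) heq
    simpa using this
  -- membership facts
  have hmem : ∀ i : Fin 4, lam i = 1 ∨ lam i = 0 := by
    intro i
    have : lam i ∈ ({lam 0, lam 1, lam 2, lam 3} : Multiset ℝ) := by
      fin_cases i <;> simp
    rw [heqR] at this
    simpa using this
  have hsum : lam 0 + lam 1 + lam 2 + lam 3 = 1 := by
    have := congrArg Multiset.sum heqR
    simp at this
    linarith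
  have h1 : lam 1 = 0 := by
    rcases hmem 1 with h | h
    · exfalso
      have h0 : lam 0 = 1 := by
        rcases hmem 0 with h' | h'
        · exact h'
        · have := hmono (show (0:Fin 4) ≤ 1 by decide)
          rw [h', h] at this
          linarith
      have h2 : 0 ≤ lam 2 := by rcases hmem 2 with h' | h' <;> simp [h']
      have h3 : 0 ≤ lam 3 := by rcases hmem 3 with h' | h' <;> simp [h']
      rw [h0, h] at hsum
      linarith
    · exact h
  have h2 : lam 2 = 0 := by
    have hle := hmono (show (1:Fin 4) ≤ 2 by decide)
    rcases hmem 2 with h | h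
    · rw [h1, h] at hle; linarith
    · exact h
  have h3 : lam 3 = 0 := by
    have hle := hmono (show (2:Fin 4) ≤ 3 by decide)
    rcases hmem 3 with h | h
    · rw [h2, h] at hle; linarith
    · exact h
  have h0 : lam 0 = 1 := by rw [h1, h2, h3] at hsum; linarith
  rw [h0, h1, h2, h3, Real.sqrt_one, Real.sqrt_zero]
  norm_num
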